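/- Sub-interpolant support soundness: if sup(c) is a subset of the backward clauses L_B(π^{id(c)}) such that sup(c) ∧ Φ_s ⊨ c for every forward clause c ∈ L_F(π), and for every c ∈ L_F(π) we have Φ_m ∧ L_F(π^{id(c)}) ⊨ L_B(π^{id(c)}), then Itp := ⋀_{c ∈ L_F(π)} (⋀ sup(c) ⇒ c) satisfies Φ_s ⊨ Itp and Itp ∧ Φ_m ⊨ ⊥, where the empty clause ⊥ ∈ L_F(π) or Φ_m ∧ L_F(π) ⊨ ⊥. -/

import Mathlib

/-- Propositional variables. -/
abbrev Var := ℕ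
/-- A literal is a variable together with a polarity. -/
abbrev Lit := Var × Bool
/-- A clause is a finite set of literals. -/
abbrev Clause := Finset Lit
/-- A total truth assignment. -/
abbrev Assignment := Var → Bool

/-- Negation of a literal. -/
def Lit.neg (l : Lit) : Lit := (l.1, !l.2)

/-- An assignment satisfies a literal. -/
def satLit (σ : Assignment) (l : Lit) : Prop := σ l.1 = l.2
/-- An assignment satisfies a clause (some literal is true). -/
def satClause (σ : Assignment) (C : Clause) : Prop := ∃ l ∈ C, satLit σ l
/-- An assignment satisfies a set of clauses. -/
def satSet (σ : Assignment) (Γ : Set Clause) : Prop := ∀ C ∈ Γ, satClause σ C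
/-- Semantic consequence: every model of Γ satisfies C. -/
def entails (Γ : Set Clause) (C : Clause) : Prop :=
  ∀ σ : Assignment, satSet σ Γ → satClause σ C

/-- Unit-propagation closure: the least set of literals containing the
assumptions `A` and closed under the unit-propagation rule for clauses of `Γ`:
if all literals of a clause but one are falsified (their negations derived),
the remaining literal is derived. -/
inductive UPC (Γ : Set Clause) (A : Set Lit) : Lit → Prop
  | assm {l : Lit} : l ∈ A → UPC Γ A l
  | prop {C : Clause} {l : Lit} : C ∈ Γ → l ∈ C →
      (∀ l' ∈ C, l' ≠ l → UPC Γ A (Lit.neg l')) → UPC Γ A l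

/-- Unit propagation from `Γ` under assumptions `A` reaches a conflict:
some clause of `Γ` has all its literals falsified by the closure. -/
def upConflict (Γ : Set Clause) (A : Set Lit) : Prop :=
  ∃ C ∈ Γ, ∀ l ∈ C, UPC Γ A (Lit.neg l)

/-- `RUP Γ C` (written `Γ ⊢_UP C`): unit propagation from `Γ` together with the
negations of the literals of `C` reaches a conflict. -/
def RUP (Γ : Set Clause) (C : Clause) : Prop :=
  upConflict Γ {l | ∃ m ∈ C, l = Lit.neg m}

/-! A model of `Φs` satisfies each conjunct `⋀ sup(c) ⇒ c` by (i). Conversely, a model of `Itp`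
and `Φm` satisfies every forward clause, by induction along `id`: the earlier forward clauses
together with `Φm` give the support of `c` by (ii), and then `Itp` gives `c`. This contradicts (iii). -/

/-- `σ ⊨ Itp` for the interpolant `Itp := ⋀_{c ∈ F} (⋀ sup(c) ⇒ c)`. -/
def satItp (F : Finset Clause) (sup : Clause → Set Clause) (σ : Assignment) : Prop :=
  ∀ c ∈ F, satSet σ (sup c) → satClause σ c

theorem satSet_union {σ : Assignment} {Γ Δ : Set Clause} :
    satSet σ (Γ ∪ Δ) ↔ satSet σ Γ ∧ satSet σ Δ :=
  Set.union_subset_iff (u := {C | satClause σ C})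

theorem satItp_of_satSet {Γ : Set Clause} {F : Finset Clause} {sup : Clause → Set Clause}
    (hsup : ∀ c ∈ F, entails (sup c ∪ Γ) c) {σ : Assignment} (hσ : satSet σ Γ) :
    satItp F sup σ :=
  fun c hc hsupσ => hsup c hc σ (satSet_union.2 ⟨hsupσ, hσ⟩)

theorem Set.forall_mem_of_forall_lt_imp {α : Type*} {s : Set α} (f : α → ℕ) {P : α → Prop}
    (h : ∀ a ∈ s, (∀ b ∈ s, f b < f a → P b) → P a) : ∀ a ∈ s, P a := by
  intro a
  induction a using (measure f).wf.induction with
  | _ a ih => exact fun ha => h a ha fun b hb hba => ih b hba hb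

theorem satSet_of_satItp {Γ : Set Clause} {F : Finset Clause} {id : Clause → ℕ}
    {sup : Clause → Set Clause}
    (hback : ∀ c ∈ F, ∀ b ∈ sup c, entails (Γ ∪ {d | d ∈ F ∧ id d < id c}) b)
    {σ : Assignment} (hItp : satItp F sup σ) (hσ : satSet σ Γ) : satSet σ ↑F := by
  refine Set.forall_mem_of_forall_lt_imp id fun c hc hearlier => hItp c hc fun b hb => ?_
  exact hback c hc b hb σ (satSet_union.2 ⟨hσ, fun d ⟨hd, hdc⟩ => hearlier d hd hdc⟩)

/-- sub-interpolant support soundness.  `F` is the finite set of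
forward clauses, ordered by `id`; `LBpre c` are the backward clauses copied
before `c`; forward clauses copied before `c` are those of `F` with smaller
`id`; `sup c ⊆ LBpre c` supports `c` over `Φs`.  If (i) each forward clause is
entailed by `Φs` with its support, (ii) each backward-clause prefix is entailed
by `Φm` with the earlier forward clauses, and (iii) `Φm` with all forward
clauses is unsatisfiable, then `Itp := ⋀_{c ∈ F} (⋀ sup(c) ⇒ c)` satisfies
`Φs ⊨ Itp` and `Itp ∧ Φm ⊨ ⊥`. -/
theorem support_interpolant_sound (Φs Φm : Set Clause) (F : Finset Clause)
    (id : Clause → ℕ) (LBpre : Clause → Set Clause) (sup : Clause → Set Clause)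
    (hsub : ∀ c ∈ F, sup c ⊆ LBpre c)
    (hsup : ∀ c ∈ F, entails (sup c ∪ Φs) c)
    (hback : ∀ c ∈ F, ∀ b ∈ LBpre c,
        entails (Φm ∪ {d | d ∈ F ∧ id d < id c}) b)
    (hunsat : ¬ ∃ σ : Assignment, satSet σ (Φm ∪ ↑F)) :
    (∀ σ : Assignment, satSet σ Φs →
        ∀ c ∈ F, (∀ b ∈ sup c, satClause σ b) → satClause σ c) ∧
    ¬ ∃ σ : Assignment,
        (∀ c ∈ F, (∀ b ∈ sup c, satClause σ b) → satClause σ c) ∧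
        satSet σ Φm := by
  refine ⟨fun σ hσ => satItp_of_satSet hsup hσ, ?_⟩
  rintro ⟨σ, hItp, hm⟩
  have hF : satSet σ ↑F :=
    satSet_of_satItp (fun c hc b hb => hback c hc b (hsub c hc hb)) hItp hm
  exact hunsat ⟨σ, satSet_union.2 ⟨hm, hF⟩⟩
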